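/- Let {ℋ; ℰ; 𝒟_ℰ} be a quantized domain in a Hilbert space ℋ, with ℰ = {ℋ_ι : ι ∈ Υ}. For each ι ∈ Υ, the map ‖·‖_ι : C*(𝒟_ℰ) → [0,∞) given by ‖T‖_ι = ‖T|_{ℋ_ι}‖ = sup{‖Tξ‖ : ξ ∈ ℋ_ι, ‖ξ‖ ≤ 1} is a C*-seminorm on C*(𝒟_ℰ), and C*(𝒟_ℰ) is a locally C*-algebra with respect to the upward filtered family {‖·‖_ι}_{ι∈Υ}. -/

import Mathlib

open scoped ComplexOrder

noncomputable section

/-! ### Locally C*-algebras -/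

/-- A C*-seminorm on a complex *-algebra: a submultiplicative *-invariant seminorm `p`
with `p (a* a) = (p a)²`. -/
structure IsCStarSeminorm {A : Type*} [Ring A] [StarRing A] [Algebra ℂ A] (p : A → ℝ) :
    Prop where
  nonneg : ∀ a, 0 ≤ p a
  map_smul : ∀ (c : ℂ) (a : A), p (c • a) = ‖c‖ * p a
  add_le : ∀ a b, p (a + b) ≤ p a + p b
  mul_le : ∀ a b, p (a * b) ≤ p a * p b
  map_star : ∀ a, p (star a) = p a
  cstar : ∀ a, p (star a * a) = p a ^ 2

/-- The `Seminorm` associated with a C*-seminorm. -/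
def IsCStarSeminorm.toSeminorm {A : Type*} [Ring A] [StarRing A] [Algebra ℂ A] {p : A → ℝ}
    (h : IsCStarSeminorm p) : Seminorm ℂ A where
  toFun := p
  map_zero' := by simpa using h.map_smul 0 0
  add_le' := h.add_le
  neg' := fun a => by simpa using h.map_smul (-1) a
  smul' := h.map_smul

/-- `A` (a complete Hausdorff topological complex `*`-algebra) is a locally C*-algebra whose
topology is determined by the upward filtered family `p = {p_λ}_{λ ∈ Λ}` of C*-seminorms. -/
structure IsLocallyCStarAlgebra {A : Type*} {Λ : Type*} [Ring A] [StarRing A] [Algebra ℂ A]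
    [StarModule ℂ A] [Nonempty Λ] [UniformSpace A] [IsUniformAddGroup A] (p : Λ → A → ℝ) :
    Prop where
  cstarSeminorm : ∀ l, IsCStarSeminorm (p l)
  directed : ∀ l₁ l₂ : Λ, ∃ l₃, (∀ a, p l₁ a ≤ p l₃ a) ∧ (∀ a, p l₂ a ≤ p l₃ a)
  separating : ∀ a : A, (∀ l, p l a = 0) → a = 0
  withSeminorms : WithSeminorms (fun l => (cstarSeminorm l).toSeminorm)
  complete : CompleteSpace A

/-- The data of the induced C*-seminorms `p_λ^k` on the matrix algebras `M_k(A)`: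
`pk k l` is a C*-seminorm on `M_k(A)` restricting to `p l` for `k = 1` and whose kernel is
`M_k(ker p_λ)` (these properties determine `p_λ^k` uniquely, `M_k(A_λ)` being a C*-algebra). -/
structure IsMatrixCStarSeminormFamily {A : Type*} {Λ : Type*} [Ring A] [StarRing A]
    [Algebra ℂ A] (p : Λ → A → ℝ) (pk : ∀ k : ℕ, Λ → Matrix (Fin k) (Fin k) A → ℝ) :
    Prop where
  cstarSeminorm : ∀ k l, IsCStarSeminorm (pk k l)
  compat : ∀ l (M : Matrix (Fin 1) (Fin 1) A), pk 1 l M = p l (M 0 0)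
  ker : ∀ k l (M : Matrix (Fin k) (Fin k) A), pk k l M = 0 ↔ ∀ i j, p l (M i j) = 0

/-- `a` is `λ`-positive (`a ≥_λ 0`) w.r.t. the C*-seminorm `p = p_λ`:
`a = b* b + c` for some `b, c` with `p_λ c = 0`. -/
def LocalPositive {A : Type*} [Ring A] [StarRing A] (p : A → ℝ) (a : A) : Prop :=
  ∃ b c, p c = 0 ∧ a = star b * b + c

/-! ### Quantized domains and `C*(𝒟_ℰ)` -/

section Hilbert

variable {H : Type*} [NormedAddCommGroup H] [InnerProductSpace ℂ H]

/-- A quantized domain in a Hilbert space `H`: an upward filtered family of closed subspaces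
whose union `𝒟_ℰ` is dense in `H`. -/
structure IsQuantizedDomain {ι : Type*} (E : ι → Submodule ℂ H) : Prop where
  closed : ∀ i, IsClosed (E i : Set H)
  directed : Directed (· ≤ ·) E
  dense : Dense (⋃ i, (E i : Set H))

/-- A quantized Fréchet domain in a Hilbert space `H`: an increasing sequence of closed
subspaces whose union `𝒟_ℰ` is dense in `H`. -/
structure IsQuantizedFrechetDomain (E : ℕ → Submodule ℂ H) : Prop where
  closed : ∀ n, IsClosed (E n : Set H)
  mono : Monotone E
  dense : Dense (⋃ n, (E n : Set H))

/-- The inclusion of `ℋ_i` into the union space `𝒟_ℰ = ⋃ i, ℋ_i` (realized as `⨆ i, E i`). -/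
def inclE {ι : Type*} (E : ι → Submodule ℂ H) (i : ι) (x : H) (hx : x ∈ E i) :
    ↥(⨆ j, E j) := ⟨x, le_iSup E i hx⟩

/-- Membership in `C*(𝒟_ℰ)` for a linear operator `T` on the union space `𝒟_ℰ`, via the
characterization: every `ℋ_i` is `T`-invariant, every `ℋ_i^⊥ ∩ 𝒟_ℰ` is `T`-invariant, and
the restriction of `T` to every `ℋ_i` is bounded. -/
def MemCStar {ι : Type*} (E : ι → Submodule ℂ H)
    (T : ↥(⨆ i, E i) →ₗ[ℂ] ↥(⨆ i, E i)) : Prop :=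
  ∀ i, (∀ x : ↥(⨆ j, E j), (x : H) ∈ E i → ((T x : H) ∈ E i)) ∧
    (∀ x : ↥(⨆ j, E j), (x : H) ∈ (E i)ᗮ → ((T x : H) ∈ (E i)ᗮ)) ∧
    ∃ C : ℝ, ∀ x : ↥(⨆ j, E j), (x : H) ∈ E i → ‖(T x : H)‖ ≤ C * ‖x‖

/-- `S` is (the restriction to `𝒟_ℰ` of) the adjoint of `T`:
`⟪T x, y⟫ = ⟪x, S y⟫` for all `x, y ∈ 𝒟_ℰ`. -/
def IsAdjointOn {ι : Type*} (E : ι → Submodule ℂ H)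
    (T S : ↥(⨆ i, E i) →ₗ[ℂ] ↥(⨆ i, E i)) : Prop :=
  ∀ x y : ↥(⨆ i, E i), (inner ℂ ((T x : H)) ((y : H)) : ℂ) = inner ℂ ((x : H)) ((S y : H))

/-- The norm `‖T‖_i = ‖T|_{ℋ_i}‖ = sup {‖T x‖ : x ∈ ℋ_i, ‖x‖ ≤ 1}` of the restriction of
`T` to `ℋ_i`. -/
def restrictedNorm {ι : Type*} (E : ι → Submodule ℂ H) (i : ι)
    (T : ↥(⨆ j, E j) →ₗ[ℂ] ↥(⨆ j, E j)) : ℝ :=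
  sSup ((fun x : ↥(⨆ j, E j) => ‖(T x : H)‖) '' {x | (x : H) ∈ E i ∧ ‖(x : H)‖ ≤ 1})

section Complete

variable [CompleteSpace H]

/-- The orthogonal projection onto a closed subspace `K`, as an operator `H → H`. -/
def projCL (K : Submodule ℂ H) (hK : IsClosed (K : Set H)) : H →L[ℂ] H :=
  haveI : CompleteSpace K := hK.completeSpace_coe
  K.subtypeL.comp (K.orthogonalProjectionOnto)

theorem projCL_mem (K : Submodule ℂ H) (hK : IsClosed (K : Set H)) (x : H) :
    projCL K hK x ∈ K := by
  haveI : CompleteSpace K := hK.completeSpace_coe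
  exact (K.orthogonalProjectionOnto x).2

/-- The orthogonal projection `P_i` of `H` onto `ℋ_i`, viewed as a map into `𝒟_ℰ`. -/
def projD {ι : Type*} (E : ι → Submodule ℂ H) (hcl : ∀ i, IsClosed ((E i : Set H))) (i : ι)
    (x : H) : ↥(⨆ j, E j) :=
  inclE E i (projCL (E i) (hcl i) x) (projCL_mem _ _ _)

end Complete

/-! ### Local completely positive / completely contractive maps -/

variable {B : Type*} [Ring B] [StarRing B] [Algebra ℂ B] {Λ : Type*}

/-- `φ`, defined on the subspace `S` of `B` and with values in `C*(𝒟_ℰ)`, is local completely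
positive: for every `n` there is `λ` such that for every `k`, the `k`-amplification
`φ⁽ᵏ⁾([a_ij]) = [φ(a_ij)]` restricted to `ℋ_n^k` is a positive operator whenever
`[a_ij] ≥_λ 0`, and vanishes whenever `p_λ^k([a_ij]) = 0`. -/
def IsLocalCPOn {H : Type*} [NormedAddCommGroup H] [InnerProductSpace ℂ H] {ι : Type*}
    (pk : ∀ k : ℕ, Λ → Matrix (Fin k) (Fin k) B → ℝ)
    (E : ι → Submodule ℂ H) (S : Submodule ℂ B)
    (φ : ↥S →ₗ[ℂ] (↥(⨆ n, E n) →ₗ[ℂ] ↥(⨆ n, E n))) : Prop :=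
  ∀ n : ι, ∃ l : Λ, ∀ (k : ℕ) (M : Matrix (Fin k) (Fin k) B) (hM : ∀ i j, M i j ∈ S),
    (LocalPositive (pk k l) M →
      ∀ (ξ : Fin k → H) (hξ : ∀ i, ξ i ∈ E n),
        0 ≤ ∑ i, ∑ j, (inner ℂ (ξ i) ((φ ⟨M i j, hM i j⟩ (inclE E n (ξ j) (hξ j)) : H)) : ℂ)) ∧
    (pk k l M = 0 → ∀ (i j : Fin k) (x : H) (hx : x ∈ E n),
      (φ ⟨M i j, hM i j⟩ (inclE E n x hx) : H) = 0)

/-- `φ : B → C*(𝒟_ℰ)` is local completely positive. -/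
def IsLocalCP {H : Type*} [NormedAddCommGroup H] [InnerProductSpace ℂ H] {ι : Type*}
    (pk : ∀ k : ℕ, Λ → Matrix (Fin k) (Fin k) B → ℝ)
    (E : ι → Submodule ℂ H)
    (φ : B →ₗ[ℂ] (↥(⨆ n, E n) →ₗ[ℂ] ↥(⨆ n, E n))) : Prop :=
  ∀ n : ι, ∃ l : Λ, ∀ (k : ℕ) (M : Matrix (Fin k) (Fin k) B),
    (LocalPositive (pk k l) M →
      ∀ (ξ : Fin k → H) (hξ : ∀ i, ξ i ∈ E n),
        0 ≤ ∑ i, ∑ j, (inner ℂ (ξ i) ((φ (M i j) (inclE E n (ξ j) (hξ j)) : H)) : ℂ)) ∧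
    (pk k l M = 0 → ∀ (i j : Fin k) (x : H) (hx : x ∈ E n),
      (φ (M i j) (inclE E n x hx) : H) = 0)

/-- `φ`, defined on the subspace `S` of `B` and with values in `C*(𝒟_ℰ)`, is local completely
contractive: for every `n` there is `λ` such that
`‖φ⁽ᵏ⁾([a_ij])|_{ℋ_n^k}‖ ≤ p_λ^k([a_ij])` for every `k` and every `[a_ij] ∈ M_k` with entries
in `S` (expressed via `‖φ⁽ᵏ⁾([a_ij]) ξ‖² ≤ p_λ^k([a_ij])² ‖ξ‖²` for `ξ ∈ ℋ_n^k`). -/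
def IsLocalCCOn {H : Type*} [NormedAddCommGroup H] [InnerProductSpace ℂ H] {ι : Type*}
    (pk : ∀ k : ℕ, Λ → Matrix (Fin k) (Fin k) B → ℝ)
    (E : ι → Submodule ℂ H) (S : Submodule ℂ B)
    (φ : ↥S →ₗ[ℂ] (↥(⨆ n, E n) →ₗ[ℂ] ↥(⨆ n, E n))) : Prop :=
  ∀ n : ι, ∃ l : Λ, ∀ (k : ℕ) (M : Matrix (Fin k) (Fin k) B) (hM : ∀ i j, M i j ∈ S),
    ∀ (ξ : Fin k → H) (hξ : ∀ i, ξ i ∈ E n),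
      ∑ i, ‖∑ j, (φ ⟨M i j, hM i j⟩ (inclE E n (ξ j) (hξ j)) : H)‖ ^ 2 ≤
        pk k l M ^ 2 * ∑ j, ‖ξ j‖ ^ 2

/-- `φ : B → C*(𝒟_ℰ)` is local completely contractive. -/
def IsLocalCC {H : Type*} [NormedAddCommGroup H] [InnerProductSpace ℂ H] {ι : Type*}
    (pk : ∀ k : ℕ, Λ → Matrix (Fin k) (Fin k) B → ℝ)
    (E : ι → Submodule ℂ H)
    (φ : B →ₗ[ℂ] (↥(⨆ n, E n) →ₗ[ℂ] ↥(⨆ n, E n))) : Prop :=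
  ∀ n : ι, ∃ l : Λ, ∀ (k : ℕ) (M : Matrix (Fin k) (Fin k) B),
    ∀ (ξ : Fin k → H) (hξ : ∀ i, ξ i ∈ E n),
      ∑ i, ‖∑ j, (φ (M i j) (inclE E n (ξ j) (hξ j)) : H)‖ ^ 2 ≤
        pk k l M ^ 2 * ∑ j, ‖ξ j‖ ^ 2

/-- `φ`, defined on the subspace `S` of `B` and with values in `B(H)`, is local completely
positive (w.r.t. the trivial quantized domain `ℰ = {H}`, for which `C*(𝒟_ℰ) = B(H)`). -/
def IsLocalCPBOn {H : Type*} [NormedAddCommGroup H] [InnerProductSpace ℂ H]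
    (pk : ∀ k : ℕ, Λ → Matrix (Fin k) (Fin k) B → ℝ)
    (S : Submodule ℂ B) (φ : ↥S →ₗ[ℂ] (H →L[ℂ] H)) : Prop :=
  ∃ l : Λ, ∀ (k : ℕ) (M : Matrix (Fin k) (Fin k) B) (hM : ∀ i j, M i j ∈ S),
    (LocalPositive (pk k l) M →
      ∀ ξ : Fin k → H, 0 ≤ ∑ i, ∑ j, (inner ℂ (ξ i) (φ ⟨M i j, hM i j⟩ (ξ j)) : ℂ)) ∧
    (pk k l M = 0 → ∀ i j, φ ⟨M i j, hM i j⟩ = 0)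

/-- `φ : B → B(H)` is local completely positive (w.r.t. the trivial quantized domain
`ℰ = {H}`). -/
def IsLocalCPB {H : Type*} [NormedAddCommGroup H] [InnerProductSpace ℂ H]
    (pk : ∀ k : ℕ, Λ → Matrix (Fin k) (Fin k) B → ℝ)
    (φ : B →ₗ[ℂ] (H →L[ℂ] H)) : Prop :=
  ∃ l : Λ, ∀ (k : ℕ) (M : Matrix (Fin k) (Fin k) B),
    (LocalPositive (pk k l) M →
      ∀ ξ : Fin k → H, 0 ≤ ∑ i, ∑ j, (inner ℂ (ξ i) (φ (M i j) (ξ j)) : ℂ)) ∧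
    (pk k l M = 0 → ∀ i j, φ (M i j) = 0)

end Hilbert

/-! ### The `2 × 2` constructions -/

section Two

variable {H : Type*} [NormedAddCommGroup H] [InnerProductSpace ℂ H]

/-- The quantized domain `ℰ ⊕ ℰ = {ℋ_n ⊕ ℋ_n}` in `H ⊕ H` (modeled as `PiLp 2` over
`Fin 2`). -/
def E2 {ι : Type*} (E : ι → Submodule ℂ H) (n : ι) : Submodule ℂ (PiLp 2 fun _ : Fin 2 => H) where
  carrier := {v | ∀ j, v j ∈ E n}
  add_mem' := fun hv hw j => (E n).add_mem (hv j) (hw j)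
  zero_mem' := fun _ => (E n).zero_mem
  smul_mem' := fun c _ hv j => (E n).smul_mem c (hv j)

theorem E2_directed {ι : Type*} {E : ι → Submodule ℂ H} (hE : Directed (· ≤ ·) E) :
    Directed (· ≤ ·) (E2 E) := fun i j =>
  let ⟨k, h1, h2⟩ := hE i j
  ⟨k, fun _ hv l => h1 (hv l), fun _ hv l => h2 (hv l)⟩

/-- The `j`-th component map `𝒟_{ℰ⊕ℰ} → 𝒟_ℰ`. -/
def cmpD {ι : Type*} [Nonempty ι] (E : ι → Submodule ℂ H) (hE : Directed (· ≤ ·) E)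
    (j : Fin 2) : ↥(⨆ n, E2 E n) →ₗ[ℂ] ↥(⨆ n, E n) where
  toFun v := ⟨(v : PiLp 2 fun _ : Fin 2 => H) j, by
    obtain ⟨n, hn⟩ := (Submodule.mem_iSup_of_directed _ (E2_directed hE)).mp v.2
    exact le_iSup E n (hn j)⟩
  map_add' v w := Subtype.ext rfl
  map_smul' c v := Subtype.ext rfl

end Two

section Mat2

variable {A : Type*} [Ring A] [StarRing A] [Algebra ℂ A] {Λ : Type*}

/-- The canonical identification of `M_k(M₂(A))` with `M_{2k}(A)`. -/
def matFlatten (k : ℕ) (X : Matrix (Fin k) (Fin k) (Matrix (Fin 2) (Fin 2) A)) :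
    Matrix (Fin (k * 2)) (Fin (k * 2)) A :=
  Matrix.of fun i j =>
    X (finProdFinEquiv.symm i).1 (finProdFinEquiv.symm j).1
      (finProdFinEquiv.symm i).2 (finProdFinEquiv.symm j).2

/-- The C*-seminorms `p_λ^k` on the matrix algebras `M_k(M₂(A))`, obtained from the
C*-seminorms `p_λ^{2k}` on `M_{2k}(A)` via the canonical identification. -/
def pk2 (pk : ∀ k : ℕ, Λ → Matrix (Fin k) (Fin k) A → ℝ) (k : ℕ) (l : Λ)
    (X : Matrix (Fin k) (Fin k) (Matrix (Fin 2) (Fin 2) A)) : ℝ :=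
  pk (k * 2) l (matFlatten k X)

variable [StarModule ℂ A]

/-- The local operator system `S_M ⊆ M₂(A)` associated with a local operator space `M ⊆ A`:
all matrices `[[α·1, a], [b*, β·1]]` with `α, β ∈ ℂ` and `a, b ∈ M`. -/
def SM (M : Submodule ℂ A) : Submodule ℂ (Matrix (Fin 2) (Fin 2) A) where
  carrier := {X | X 0 0 ∈ Submodule.span ℂ ({1} : Set A) ∧
    X 1 1 ∈ Submodule.span ℂ ({1} : Set A) ∧ X 0 1 ∈ M ∧ star (X 1 0) ∈ M}
  add_mem' := fun {X Y} hX hY =>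
    ⟨add_mem hX.1 hY.1, add_mem hX.2.1 hY.2.1, add_mem hX.2.2.1 hY.2.2.1, by
      rw [Matrix.add_apply, star_add]; exact add_mem hX.2.2.2 hY.2.2.2⟩
  zero_mem' := ⟨zero_mem _, zero_mem _, zero_mem _, by
    rw [Matrix.zero_apply, star_zero]; exact zero_mem _⟩
  smul_mem' := fun c X hX =>
    ⟨Submodule.smul_mem _ c hX.1, Submodule.smul_mem _ c hX.2.1,
      Submodule.smul_mem _ c hX.2.2.1, by
      rw [Matrix.smul_apply, star_smul]; exact Submodule.smul_mem _ _ hX.2.2.2⟩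

end Mat2

/-!
Restricting to `ℋ_ι` maps `C*(𝒟_ℰ)` linearly and multiplicatively into `B(ℋ_ι)`, and `‖T‖_ι`
is the operator norm of `T|ℋ_ι`. Because `T` also leaves `ℋ_ι^⊥ ∩ 𝒟_ℰ` invariant, the adjoint
`T*` restricts to the Hilbert-space adjoint of `T|ℋ_ι`, so the C*-identity is inherited from the
C*-algebra `B(ℋ_ι)`. For completeness, a Cauchy filter converges pointwise on `𝒟_ℰ`, every vector
lying in some `ℋ_ι`; the limit leaves `ℋ_ι` and `ℋ_ι^⊥` invariant as these are closed, and the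
Cauchy estimates on the unit ball of `ℋ_ι` pass to the limit.
-/

open Filter Topology
open scoped InnerProduct

theorem restrictedNorm_nonneg {H : Type*} [NormedAddCommGroup H] [InnerProductSpace ℂ H]
    {ι : Type*} (E : ι → Submodule ℂ H) (i : ι) (T : ↥(⨆ j, E j) →ₗ[ℂ] ↥(⨆ j, E j)) :
    0 ≤ restrictedNorm E i T :=
  Real.sSup_nonneg fun _ ⟨_, _, hr⟩ => hr ▸ norm_nonneg _

namespace MemCStar

variable {H : Type*} [NormedAddCommGroup H] [InnerProductSpace ℂ H] {ι : Type*}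
  {E : ι → Submodule ℂ H} {T S : ↥(⨆ j, E j) →ₗ[ℂ] ↥(⨆ j, E j)} {i : ι}

def restrictCLM (hT : MemCStar E T) (i : ι) : E i →L[ℂ] E i :=
  LinearMap.mkContinuousOfExistsBound
    (((⨆ j, E j).subtype ∘ₗ T ∘ₗ Submodule.inclusion (le_iSup E i)).codRestrict (E i)
      fun x => (hT i).1 _ x.2)
    (let ⟨C, hC⟩ := (hT i).2.2; ⟨C, fun x => hC _ x.2⟩)

theorem restrictedNorm_eq_norm_restrictCLM (hT : MemCStar E T) (i : ι) :
    restrictedNorm E i T = ‖hT.restrictCLM i‖ := by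
  rw [← ContinuousLinearMap.sSup_unitClosedBall_eq_norm]
  unfold restrictedNorm
  congr 1
  ext r
  constructor
  · rintro ⟨x, ⟨hx, hx1⟩, rfl⟩
    exact ⟨⟨x, hx⟩, mem_closedBall_zero_iff.2 hx1, rfl⟩
  · rintro ⟨x, hx1, rfl⟩
    exact ⟨Submodule.inclusion (le_iSup E i) x, ⟨x.2, mem_closedBall_zero_iff.1 hx1⟩, rfl⟩

theorem norm_apply_le (hT : MemCStar E T) {x : ↥(⨆ j, E j)} (hx : (x : H) ∈ E i) :
    ‖(T x : H)‖ ≤ restrictedNorm E i T * ‖(x : H)‖ := by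
  rw [hT.restrictedNorm_eq_norm_restrictCLM]
  exact (hT.restrictCLM i).le_opNorm ⟨x, hx⟩

theorem restrictedNorm_le_of_bound (hT : MemCStar E T) {M : ℝ} (hM : 0 ≤ M)
    (h : ∀ x : ↥(⨆ j, E j), (x : H) ∈ E i → ‖(T x : H)‖ ≤ M * ‖(x : H)‖) :
    restrictedNorm E i T ≤ M := by
  rw [hT.restrictedNorm_eq_norm_restrictCLM]
  exact (hT.restrictCLM i).opNorm_le_bound hM fun x => h _ x.2

theorem add (hT : MemCStar E T) (hS : MemCStar E S) : MemCStar E (T + S) := fun i =>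
  ⟨fun x hx => add_mem ((hT i).1 x hx) ((hS i).1 x hx),
    fun x hx => add_mem ((hT i).2.1 x hx) ((hS i).2.1 x hx),
    restrictedNorm E i T + restrictedNorm E i S, fun x hx => by
      rw [add_mul]
      exact (norm_add_le (T x : H) (S x)).trans
        (add_le_add (hT.norm_apply_le hx) (hS.norm_apply_le hx))⟩

theorem sub (hT : MemCStar E T) (hS : MemCStar E S) : MemCStar E (T - S) := fun i =>
  ⟨fun x hx => sub_mem ((hT i).1 x hx) ((hS i).1 x hx),
    fun x hx => sub_mem ((hT i).2.1 x hx) ((hS i).2.1 x hx),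
    restrictedNorm E i T + restrictedNorm E i S, fun x hx => by
      rw [add_mul]
      exact (norm_sub_le (T x : H) (S x)).trans
        (add_le_add (hT.norm_apply_le hx) (hS.norm_apply_le hx))⟩

theorem smul (hT : MemCStar E T) (c : ℂ) : MemCStar E (c • T) := fun i =>
  ⟨fun x hx => (E i).smul_mem c ((hT i).1 x hx),
    fun x hx => (E i)ᗮ.smul_mem c ((hT i).2.1 x hx),
    ‖c‖ * restrictedNorm E i T, fun x hx => by
      rw [mul_assoc]
      exact (norm_smul c (T x : H)).trans_le (by gcongr; exact hT.norm_apply_le hx)⟩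

theorem comp (hT : MemCStar E T) (hS : MemCStar E S) : MemCStar E (T ∘ₗ S) := fun i =>
  ⟨fun x hx => (hT i).1 _ ((hS i).1 x hx),
    fun x hx => (hT i).2.1 _ ((hS i).2.1 x hx),
    restrictedNorm E i T * restrictedNorm E i S, fun x hx => by
      rw [mul_assoc]
      exact (hT.norm_apply_le ((hS i).1 x hx)).trans
        (by gcongr; exacts [restrictedNorm_nonneg E i T, hS.norm_apply_le hx])⟩

theorem restrictCLM_add (hT : MemCStar E T) (hS : MemCStar E S) :
    (hT.add hS).restrictCLM i = hT.restrictCLM i + hS.restrictCLM i := rfl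

theorem restrictCLM_smul (hT : MemCStar E T) (c : ℂ) :
    (hT.smul c).restrictCLM i = c • hT.restrictCLM i := rfl

theorem restrictCLM_comp (hT : MemCStar E T) (hS : MemCStar E S) :
    (hT.comp hS).restrictCLM i = hT.restrictCLM i ∘L hS.restrictCLM i := rfl

theorem norm_sub_apply_le (hT : MemCStar E T) (hS : MemCStar E S) {x : ↥(⨆ j, E j)}
    (hx : (x : H) ∈ E i) :
    ‖(T x : H) - S x‖ ≤ restrictedNorm E i (T - S) * ‖(x : H)‖ :=
  (hT.sub hS).norm_apply_le hx

theorem restrictedNorm_add_le (hT : MemCStar E T) (hS : MemCStar E S) (i : ι) :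
    restrictedNorm E i (T + S) ≤ restrictedNorm E i T + restrictedNorm E i S := by
  rw [restrictedNorm_eq_norm_restrictCLM hT, restrictedNorm_eq_norm_restrictCLM hS,
    restrictedNorm_eq_norm_restrictCLM (hT.add hS), restrictCLM_add hT hS]
  exact norm_add_le (hT.restrictCLM i) (hS.restrictCLM i)

theorem restrictedNorm_smul (hT : MemCStar E T) (c : ℂ) (i : ι) :
    restrictedNorm E i (c • T) = ‖c‖ * restrictedNorm E i T := by
  rw [restrictedNorm_eq_norm_restrictCLM hT, restrictedNorm_eq_norm_restrictCLM (hT.smul c),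
    restrictCLM_smul hT c]
  -- instance search does not find `NormSMulClass ℂ (E i →L[ℂ] E i)` by itself
  exact (NormedSpace.toNormSMulClass (𝕜 := ℂ) (E := E i →L[ℂ] E i)).norm_smul c _

theorem restrictedNorm_comp_le (hT : MemCStar E T) (hS : MemCStar E S) (i : ι) :
    restrictedNorm E i (T ∘ₗ S) ≤ restrictedNorm E i T * restrictedNorm E i S := by
  rw [restrictedNorm_eq_norm_restrictCLM hT, restrictedNorm_eq_norm_restrictCLM hS,
    restrictedNorm_eq_norm_restrictCLM (hT.comp hS), restrictCLM_comp hT hS]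
  exact ContinuousLinearMap.opNorm_comp_le _ _

theorem restrictedNorm_mono (hT : MemCStar E T) {k : ι} (hik : E i ≤ E k) :
    restrictedNorm E i T ≤ restrictedNorm E k T :=
  hT.restrictedNorm_le_of_bound (restrictedNorm_nonneg E k T) fun _ hx =>
    hT.norm_apply_le (hik hx)

theorem eq_zero_of_forall_restrictedNorm_eq_zero [Nonempty ι] (hE : Directed (· ≤ ·) E)
    (hT : MemCStar E T) (h : ∀ i, restrictedNorm E i T = 0) : T = 0 := by
  ext x
  obtain ⟨i, hx⟩ := (Submodule.mem_iSup_of_directed E hE).1 x.2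
  simpa [h i] using hT.norm_apply_le hx

section Adjoint

variable [∀ i, CompleteSpace (E i)]

theorem coe_adjoint_restrictCLM_apply (hT : MemCStar E T) (hTS : IsAdjointOn E T S)
    (y : E i) :
    ((((hT.restrictCLM i)†) y : E i) : H) = S (Submodule.inclusion (le_iSup E i) y) := by
  -- `w = T* y - (T|ℋ_ι)† y` is orthogonal to `ℋ_ι`, hence so is `T w`, and `⟪w, w⟫ = ⟪T w, y⟫ = 0`
  set A := hT.restrictCLM i
  set y' := Submodule.inclusion (le_iSup E i) y
  set w : ↥(⨆ j, E j) := S y' - Submodule.inclusion (le_iSup E i) ((A†) y) with hw_def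
  have hw : (w : H) ∈ (E i)ᗮ := by
    refine (Submodule.mem_orthogonal _ _).2 fun u hu => ?_
    have hA := A.adjoint_inner_right ⟨u, hu⟩ y
    rw [Submodule.coe_inner, Submodule.coe_inner] at hA
    rw [hw_def, Submodule.coe_sub, inner_sub_right, sub_eq_zero]
    exact (hTS (Submodule.inclusion (le_iSup E i) ⟨u, hu⟩) _).symm.trans hA.symm
  have hTw : inner ℂ (T w : H) (y' : H) = 0 :=
    (Submodule.mem_orthogonal' _ _).1 ((hT i).2.1 w hw) _ y.2
  have hwA : inner ℂ (w : H) (((A†) y : E i) : H) = 0 :=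
    (Submodule.mem_orthogonal' _ _).1 hw _ ((A†) y).2
  have hww : inner ℂ (w : H) (w : H) = 0 :=
    calc inner ℂ (w : H) (w : H)
        = inner ℂ (w : H) (S y' : H) -
          inner ℂ (w : H) (((A†) y : E i) : H) := inner_sub_right _ _ _
      _ = 0 := by rw [← hTS, hTw, hwA, sub_zero]
  exact (sub_eq_zero.1 (inner_self_eq_zero.1 hww)).symm

theorem of_isAdjointOn (hT : MemCStar E T) (hTS : IsAdjointOn E T S) : MemCStar E S :=
  fun i =>
  ⟨fun x hx => hT.coe_adjoint_restrictCLM_apply hTS ⟨x, hx⟩ ▸ (((hT.restrictCLM i)†) ⟨x, hx⟩).2,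
    fun x hx => (Submodule.mem_orthogonal _ _).2 fun u hu =>
      (hTS ⟨u, le_iSup E i hu⟩ x).symm.trans
        ((Submodule.mem_orthogonal _ _).1 hx _ ((hT i).1 _ hu)),
    ‖(hT.restrictCLM i)†‖, fun x hx =>
      hT.coe_adjoint_restrictCLM_apply hTS ⟨x, hx⟩ ▸ ((hT.restrictCLM i)†).le_opNorm ⟨x, hx⟩⟩

theorem restrictCLM_eq_adjoint (hT : MemCStar E T) (hTS : IsAdjointOn E T S)
    (hS : MemCStar E S) : hS.restrictCLM i = (hT.restrictCLM i)† :=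
  ContinuousLinearMap.ext fun y => Subtype.ext (hT.coe_adjoint_restrictCLM_apply hTS y).symm

theorem restrictedNorm_eq_of_isAdjointOn (hT : MemCStar E T)
    (hTS : IsAdjointOn E T S) (i : ι) : restrictedNorm E i S = restrictedNorm E i T := by
  have hS := hT.of_isAdjointOn hTS
  rw [restrictedNorm_eq_norm_restrictCLM hT, restrictedNorm_eq_norm_restrictCLM hS,
    hT.restrictCLM_eq_adjoint hTS hS, ContinuousLinearMap.adjoint.norm_map]

theorem restrictedNorm_adjoint_comp_self (hT : MemCStar E T)
    (hTS : IsAdjointOn E T S) (i : ι) :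
    restrictedNorm E i (S ∘ₗ T) = restrictedNorm E i T ^ 2 := by
  have hS := hT.of_isAdjointOn hTS
  rw [restrictedNorm_eq_norm_restrictCLM hT, restrictedNorm_eq_norm_restrictCLM (hS.comp hT),
    restrictCLM_comp hS hT, hT.restrictCLM_eq_adjoint hTS hS,
    ContinuousLinearMap.norm_adjoint_comp_self, sq]

end Adjoint

end MemCStar

section Completeness

variable {H : Type*} [NormedAddCommGroup H] [InnerProductSpace ℂ H] {ι : Type*}
  {E : ι → Submodule ℂ H}

def IsRestrictedNormCauchy (f : Filter {T : ↥(⨆ j, E j) →ₗ[ℂ] ↥(⨆ j, E j) // MemCStar E T}) :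
    Prop :=
  ∀ (i : ι) (ε : ℝ), 0 < ε → ∃ s ∈ f, ∀ T₁ ∈ s, ∀ T₂ ∈ s,
    restrictedNorm E i (T₁.val - T₂.val) < ε

variable {f : Filter {T : ↥(⨆ j, E j) →ₗ[ℂ] ↥(⨆ j, E j) // MemCStar E T}}

theorem IsRestrictedNormCauchy.cauchy_map_apply [f.NeBot] (hf : IsRestrictedNormCauchy f)
    {i : ι} {x : ↥(⨆ j, E j)} (hx : (x : H) ∈ E i) :
    Cauchy (f.map fun T => (T.val x : H)) := by
  refine Metric.cauchy_iff.2 ⟨inferInstance, fun ε hε => ?_⟩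
  obtain ⟨s, hs, hsε⟩ := hf i (ε / (‖(x : H)‖ + 1)) (by positivity)
  refine ⟨_, image_mem_map hs, ?_⟩
  rintro _ ⟨T₁, hT₁, rfl⟩ _ ⟨T₂, hT₂, rfl⟩
  rw [dist_eq_norm]
  calc ‖(T₁.val x : H) - T₂.val x‖ ≤ restrictedNorm E i (T₁.val - T₂.val) * ‖(x : H)‖ :=
        T₁.2.norm_sub_apply_le T₂.2 hx
    _ ≤ ε / (‖(x : H)‖ + 1) * ‖(x : H)‖ := by gcongr; exact (hsε T₁ hT₁ T₂ hT₂).le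
    _ < ε := by
        rw [div_mul_eq_mul_div, div_lt_iff₀ (by positivity)]
        nlinarith [norm_nonneg (x : H)]

theorem IsRestrictedNormCauchy.exists_tendsto_apply [CompleteSpace H] [Nonempty ι] [f.NeBot]
    (hE : IsQuantizedDomain E) (hf : IsRestrictedNormCauchy f) :
    ∃ L : ↥(⨆ j, E j) →ₗ[ℂ] ↥(⨆ j, E j),
      ∀ x, Tendsto (fun T : {T // MemCStar E T} => (T.val x : H)) f (𝓝 (L x : H)) := by
  have hlim (x : ↥(⨆ j, E j)) :
      ∃ y, Tendsto (fun T : {T // MemCStar E T} => (T.val x : H)) f (𝓝 y) := by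
    obtain ⟨i, hx⟩ := (Submodule.mem_iSup_of_directed E hE.directed).1 x.2
    exact CompleteSpace.complete (hf.cauchy_map_apply hx)
  choose g hg using hlim
  have hgD (x : ↥(⨆ j, E j)) : g x ∈ ⨆ j, E j := by
    obtain ⟨i, hx⟩ := (Submodule.mem_iSup_of_directed E hE.directed).1 x.2
    exact le_iSup E i <| (hE.closed i).mem_of_tendsto (hg x) (.of_forall fun T => (T.2 i).1 x hx)
  let L₀ : ↥(⨆ j, E j) →ₗ[ℂ] H :=
    linearMapOfTendsto g (fun T : {T // MemCStar E T} => (⨆ j, E j).subtype ∘ₗ T.val)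
      (tendsto_pi_nhds.2 hg)
  exact ⟨L₀.codRestrict _ hgD, hg⟩

theorem norm_sub_apply_le_of_tendsto [f.NeBot] {L : ↥(⨆ j, E j) →ₗ[ℂ] ↥(⨆ j, E j)}
    (hL : ∀ x, Tendsto (fun T : {T // MemCStar E T} => (T.val x : H)) f (𝓝 (L x : H)))
    {i : ι} {ε : ℝ} {s : Set {T // MemCStar E T}} (hs : s ∈ f)
    (hsε : ∀ T₁ ∈ s, ∀ T₂ ∈ s, restrictedNorm E i (T₁.val - T₂.val) < ε)
    {T : {T // MemCStar E T}} (hT : T ∈ s) {x : ↥(⨆ j, E j)} (hx : (x : H) ∈ E i) :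
    ‖(T.val x : H) - L x‖ ≤ ε * ‖(x : H)‖ :=
  le_of_tendsto ((tendsto_const_nhds.sub (hL x)).norm) <| eventually_of_mem hs fun T' hT' =>
    (T.2.norm_sub_apply_le T'.2 hx).trans (by gcongr; exact (hsε T hT T' hT').le)

theorem memCStar_of_tendsto [f.NeBot] (hE : IsQuantizedDomain E) (hf : IsRestrictedNormCauchy f)
    {L : ↥(⨆ j, E j) →ₗ[ℂ] ↥(⨆ j, E j)}
    (hL : ∀ x, Tendsto (fun T : {T // MemCStar E T} => (T.val x : H)) f (𝓝 (L x : H))) :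
    MemCStar E L := fun i => by
  obtain ⟨s, hs, hs1⟩ := hf i 1 one_pos
  obtain ⟨T₀, hT₀⟩ := nonempty_of_mem hs
  refine ⟨fun x hx => (hE.closed i).mem_of_tendsto (hL x) (.of_forall fun T => (T.2 i).1 x hx),
    fun x hx => (E i).isClosed_orthogonal.mem_of_tendsto (hL x)
      (.of_forall fun T => (T.2 i).2.1 x hx),
    restrictedNorm E i T₀.val + 1, fun x hx => ?_⟩
  calc ‖(L x : H)‖ ≤ ‖(T₀.val x : H)‖ + ‖(T₀.val x : H) - L x‖ := norm_le_insert _ _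
    _ ≤ restrictedNorm E i T₀.val * ‖(x : H)‖ + 1 * ‖(x : H)‖ :=
        add_le_add (T₀.2.norm_apply_le hx) (norm_sub_apply_le_of_tendsto hL hs hs1 hT₀ hx)
    _ = (restrictedNorm E i T₀.val + 1) * ‖(x : H)‖ := by ring

theorem IsRestrictedNormCauchy.exists_limit [CompleteSpace H] [Nonempty ι] [f.NeBot]
    (hE : IsQuantizedDomain E) (hf : IsRestrictedNormCauchy f) :
    ∃ L : {T : ↥(⨆ j, E j) →ₗ[ℂ] ↥(⨆ j, E j) // MemCStar E T},
      ∀ (i : ι) (ε : ℝ), 0 < ε → ∃ s ∈ f, ∀ T ∈ s, restrictedNorm E i (T.val - L.val) < ε := by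
  obtain ⟨L, hL⟩ := hf.exists_tendsto_apply hE
  have hLmem := memCStar_of_tendsto hE hf hL
  refine ⟨⟨L, hLmem⟩, fun i ε hε => ?_⟩
  obtain ⟨s, hs, hsε⟩ := hf i (ε / 2) (half_pos hε)
  refine ⟨s, hs, fun T hT => ?_⟩
  calc restrictedNorm E i (T.val - L) ≤ ε / 2 :=
        (T.2.sub hLmem).restrictedNorm_le_of_bound (half_pos hε).le fun x hx =>
          norm_sub_apply_le_of_tendsto hL hs hsε hT hx
    _ < ε := half_lt_self hε

end Completeness

theorem statement_3 {H : Type*} [NormedAddCommGroup H] [InnerProductSpace ℂ H]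
    [CompleteSpace H] {ι : Type*} [Nonempty ι] {E : ι → Submodule ℂ H}
    (hE : IsQuantizedDomain E) :
    -- each `‖·‖_ι` is a C*-seminorm on `C*(𝒟_ℰ)`
    (∀ (i : ι) (T S : ↥(⨆ j, E j) →ₗ[ℂ] ↥(⨆ j, E j)), MemCStar E T → MemCStar E S →
      0 ≤ restrictedNorm E i T ∧
      restrictedNorm E i (T + S) ≤ restrictedNorm E i T + restrictedNorm E i S ∧
      (∀ c : ℂ, restrictedNorm E i (c • T) = ‖c‖ * restrictedNorm E i T) ∧
      restrictedNorm E i (T ∘ₗ S) ≤ restrictedNorm E i T * restrictedNorm E i S ∧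
      (∀ Tad : ↥(⨆ j, E j) →ₗ[ℂ] ↥(⨆ j, E j), IsAdjointOn E T Tad →
        restrictedNorm E i Tad = restrictedNorm E i T ∧
        restrictedNorm E i (Tad ∘ₗ T) = restrictedNorm E i T ^ 2)) ∧
    -- the family `{‖·‖_ι}` is upward filtered
    (∀ i j : ι, ∃ k : ι, ∀ T : ↥(⨆ j, E j) →ₗ[ℂ] ↥(⨆ j, E j), MemCStar E T →
      restrictedNorm E i T ≤ restrictedNorm E k T ∧
      restrictedNorm E j T ≤ restrictedNorm E k T) ∧
    -- Hausdorff
    (∀ T : ↥(⨆ j, E j) →ₗ[ℂ] ↥(⨆ j, E j), MemCStar E T →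
      (∀ i, restrictedNorm E i T = 0) → T = 0) ∧
    -- completeness of `C*(𝒟_ℰ)` w.r.t. the family `{‖·‖_ι}`
    (∀ f : Filter {T : ↥(⨆ j, E j) →ₗ[ℂ] ↥(⨆ j, E j) // MemCStar E T}, f.NeBot →
      (∀ (i : ι) (ε : ℝ), 0 < ε → ∃ s ∈ f, ∀ T₁ ∈ s, ∀ T₂ ∈ s,
        restrictedNorm E i (T₁.val - T₂.val) < ε) →
      ∃ L : {T : ↥(⨆ j, E j) →ₗ[ℂ] ↥(⨆ j, E j) // MemCStar E T},
        ∀ (i : ι) (ε : ℝ), 0 < ε → ∃ s ∈ f, ∀ T₁ ∈ s,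
          restrictedNorm E i (T₁.val - L.val) < ε) := by
  have : ∀ i, CompleteSpace (E i) := fun i => (hE.closed i).completeSpace_coe
  refine ⟨fun i T S hT hS => ⟨restrictedNorm_nonneg E i T, hT.restrictedNorm_add_le hS i,
      fun c => hT.restrictedNorm_smul c i, hT.restrictedNorm_comp_le hS i, fun Tad hTad =>
        ⟨hT.restrictedNorm_eq_of_isAdjointOn hTad i, hT.restrictedNorm_adjoint_comp_self hTad i⟩⟩,
    fun i j => ?_, fun T hT => hT.eq_zero_of_forall_restrictedNorm_eq_zero hE.directed,
    fun f _ hf => IsRestrictedNormCauchy.exists_limit hE hf⟩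
  obtain ⟨k, hik, hjk⟩ := hE.directed i j
  exact ⟨k, fun T hT => ⟨hT.restrictedNorm_mono hik, hT.restrictedNorm_mono hjk⟩⟩
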